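/- arXiv:1304.5814 — 3 statements merged into one kernel-verified Lean document; each statement's English description precedes it below -/
import Mathlib

section
/- For every real t, the row vector p(t) = e₀ · exp(tQ) (where e₀ = (1,0,0,0,0,0,0) and exp is the matrix exponential) satisfies p(t) = (1/12) · (e^{−5t}, e^{−4t}, e^{−4t}, e^{−3t}, e^{−t}, e^{−t}, 1) · M, where M is the 7×7 integer matrix with rows: (3, −3, 3, 0, −3, 3, −3), (1, 2, −6, 2, 2, 2, −3), (2, −4, 4, −4, 4, −4, 2), (2, −2, −2, 4, −2, −2, 2), (2, −2, −6, −8, −2, 10, 6), (1, 7, 5, 4, −1, −11, −5), (1, 2, 2, 2, 2, 2, 1). -/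
open Matrix

/-- The rate matrix `Q` of the 7-state continuous-time Markov chain. -/
noncomputable def Q : Matrix (Fin 7) (Fin 7) ℝ :=
  !![-3, 2, 0, 0, 0, 0, 1;
      1,-2, 1, 0, 0, 0, 0;
      0, 1,-3, 1, 1, 0, 0;
      0, 0, 1,-2, 1, 0, 0;
      0, 0, 1, 1,-3, 1, 0;
      0, 0, 0, 0, 1,-2, 1;
      1, 0, 0, 0, 0, 2,-3]

/-- The matrix of constants in the representation of `p(t) = e₀ · exp(tQ)`. -/
noncomputable def M : Matrix (Fin 7) (Fin 7) ℝ :=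
  !![ 3, -3,  3,  0, -3,  3, -3;
      1,  2, -6,  2,  2,  2, -3;
      2, -4,  4, -4,  4, -4,  2;
      2, -2, -2,  4, -2, -2,  2;
      2, -2, -6, -8, -2, 10,  6;
      1,  7,  5,  4, -1,-11, -5;
      1,  2,  2,  2,  2,  2,  1]

section Vec7
variable {α : Type*} (a₀ a₁ a₂ a₃ a₄ a₅ a₆ : α)
lemma vec7_0 : (![a₀,a₁,a₂,a₃,a₄,a₅,a₆] : Fin 7 → α) 0 = a₀ := rfl
lemma vec7_1 : (![a₀,a₁,a₂,a₃,a₄,a₅,a₆] : Fin 7 → α) 1 = a₁ := rfl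
lemma vec7_2 : (![a₀,a₁,a₂,a₃,a₄,a₅,a₆] : Fin 7 → α) 2 = a₂ := rfl
lemma vec7_3 : (![a₀,a₁,a₂,a₃,a₄,a₅,a₆] : Fin 7 → α) 3 = a₃ := rfl
lemma vec7_4 : (![a₀,a₁,a₂,a₃,a₄,a₅,a₆] : Fin 7 → α) 4 = a₄ := rfl
lemma vec7_5 : (![a₀,a₁,a₂,a₃,a₄,a₅,a₆] : Fin 7 → α) 5 = a₅ := rfl
lemma vec7_6 : (![a₀,a₁,a₂,a₃,a₄,a₅,a₆] : Fin 7 → α) 6 = a₆ := rfl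
lemma vec7_0' (h : (0:ℕ) < 7) : (![a₀,a₁,a₂,a₃,a₄,a₅,a₆] : Fin 7 → α) ⟨0,h⟩ = a₀ := rfl
lemma vec7_1' (h : (1:ℕ) < 7) : (![a₀,a₁,a₂,a₃,a₄,a₅,a₆] : Fin 7 → α) ⟨1,h⟩ = a₁ := rfl
lemma vec7_2' (h : (2:ℕ) < 7) : (![a₀,a₁,a₂,a₃,a₄,a₅,a₆] : Fin 7 → α) ⟨2,h⟩ = a₂ := rfl
lemma vec7_3' (h : (3:ℕ) < 7) : (![a₀,a₁,a₂,a₃,a₄,a₅,a₆] : Fin 7 → α) ⟨3,h⟩ = a₃ := rfl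
lemma vec7_4' (h : (4:ℕ) < 7) : (![a₀,a₁,a₂,a₃,a₄,a₅,a₆] : Fin 7 → α) ⟨4,h⟩ = a₄ := rfl
lemma vec7_5' (h : (5:ℕ) < 7) : (![a₀,a₁,a₂,a₃,a₄,a₅,a₆] : Fin 7 → α) ⟨5,h⟩ = a₅ := rfl
lemma vec7_6' (h : (6:ℕ) < 7) : (![a₀,a₁,a₂,a₃,a₄,a₅,a₆] : Fin 7 → α) ⟨6,h⟩ = a₆ := rfl
end Vec7

/-- Eigenvector matrix of `Q` (columns are eigenvectors for `-5,-4,-4,-3,-1,-1,0`). -/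
noncomputable def Pmat : Matrix (Fin 7) (Fin 7) ℝ :=
  !![-2, -2, -1,  2, -2,  4, 1;
      1,  1,  0, -1, -2,  3, 1;
     -1,  0,  1, -1,  0, -1, 1;
      0,  1,  0,  2,  1, -3, 1;
      1, -2, -1, -1,  1, -2, 1;
     -1,  1,  0, -1,  1,  0, 1;
      2,  0,  1,  2,  0,  2, 1]

/-- Inverse of `Pmat`. -/
noncomputable def Pinv : Matrix (Fin 7) (Fin 7) ℝ :=
  !![-1/8,   1/8,  -1/8,    0,   1/8,  -1/8,  1/8;
     -1/12,  1/6,  -1/6,   1/6, -1/6,   1/6, -1/12;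
     -1/12, -1/6,   1/2,  -1/6, -1/6,  -1/6,  1/4;
      1/12, -1/12, -1/12,  1/6, -1/12, -1/12, 1/12;
     -1/24, -7/24, -5/24, -1/6,  1/24, 11/24, 5/24;
      1/24, -1/24, -1/8,  -1/6, -1/24,  5/24, 1/8;
      1/12,  1/6,   1/6,   1/6,  1/6,   1/6,  1/12]

set_option maxHeartbeats 1000000 in
lemma hPPinv : Pmat * Pinv = 1 := by
  ext i j
  fin_cases i <;> fin_cases j <;>
  · simp only [Pmat, Pinv, Matrix.mul_apply, Fin.sum_univ_seven, Matrix.of_apply,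
      vec7_0, vec7_1, vec7_2, vec7_3, vec7_4, vec7_5, vec7_6,
      vec7_0', vec7_1', vec7_2', vec7_3', vec7_4', vec7_5', vec7_6', Matrix.one_apply]
    norm_num [Fin.ext_iff]

set_option maxHeartbeats 2000000 in
theorem p_matrix_representation (t : ℝ) :
    Matrix.vecMul (![1, 0, 0, 0, 0, 0, 0] : Fin 7 → ℝ) (NormedSpace.exp (t • Q)) =
      (1 / 12 : ℝ) •
        Matrix.vecMul
          ![Real.exp (-5 * t), Real.exp (-4 * t), Real.exp (-4 * t), Real.exp (-3 * t),
            Real.exp (-t), Real.exp (-t), 1] M := by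
  have hUnit : IsUnit Pmat :=
    (Matrix.isUnit_iff_isUnit_det Pmat).2 (Matrix.isUnit_det_of_right_inverse hPPinv)
  have hInv : Pmat⁻¹ = Pinv := Matrix.inv_eq_right_inv hPPinv
  have hDm : Matrix.diagonal ![-5*t, -4*t, -4*t, -3*t, -t, -t, 0] =
      !![-5*t,0,0,0,0,0,0; 0,-4*t,0,0,0,0,0; 0,0,-4*t,0,0,0,0; 0,0,0,-3*t,0,0,0;
         0,0,0,0,-t,0,0; 0,0,0,0,0,-t,0; (0:ℝ),0,0,0,0,0,0] := by
    ext i j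
    fin_cases i <;> fin_cases j <;> rfl
  have hEm : Matrix.diagonal ![Real.exp (-5*t), Real.exp (-4*t), Real.exp (-4*t),
        Real.exp (-3*t), Real.exp (-t), Real.exp (-t), 1] =
      !![Real.exp (-5*t),0,0,0,0,0,0; 0,Real.exp (-4*t),0,0,0,0,0;
         0,0,Real.exp (-4*t),0,0,0,0; 0,0,0,Real.exp (-3*t),0,0,0;
         0,0,0,0,Real.exp (-t),0,0; 0,0,0,0,0,Real.exp (-t),0; (0:ℝ),0,0,0,0,0,1] := by
    ext i j
    fin_cases i <;> fin_cases j <;> rfl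
  have key : t • Q = Pmat * Matrix.diagonal ![-5*t, -4*t, -4*t, -3*t, -t, -t, 0] * Pinv := by
    have h1 : (t • Q) * Pmat = Pmat * Matrix.diagonal ![-5*t, -4*t, -4*t, -3*t, -t, -t, 0] := by
      rw [hDm]
      ext i j
      fin_cases i <;> fin_cases j <;>
      · simp only [Q, Pmat, Matrix.mul_apply, Matrix.smul_apply, Fin.sum_univ_seven,
          Matrix.of_apply, vec7_0, vec7_1, vec7_2, vec7_3, vec7_4, vec7_5, vec7_6,
          vec7_0', vec7_1', vec7_2', vec7_3', vec7_4', vec7_5', vec7_6', smul_eq_mul]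
        ring
    calc t • Q = (t • Q) * (Pmat * Pinv) := by rw [hPPinv, mul_one]
    _ = ((t • Q) * Pmat) * Pinv := by rw [mul_assoc]
    _ = Pmat * Matrix.diagonal ![-5*t, -4*t, -4*t, -3*t, -t, -t, 0] * Pinv := by rw [h1]
  have hexp : NormedSpace.exp (Matrix.diagonal ![-5*t, -4*t, -4*t, -3*t, -t, -t, 0]) =
      Matrix.diagonal ![Real.exp (-5*t), Real.exp (-4*t), Real.exp (-4*t), Real.exp (-3*t),
        Real.exp (-t), Real.exp (-t), 1] := by
    have hv : (NormedSpace.exp (![-5*t, -4*t, -4*t, -3*t, -t, -t, 0] : Fin 7 → ℝ)) =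
        ![Real.exp (-5*t), Real.exp (-4*t), Real.exp (-4*t), Real.exp (-3*t),
          Real.exp (-t), Real.exp (-t), 1] := by
      rw [Pi.exp_def]
      funext i
      fin_cases i <;>
      · simp only [vec7_0, vec7_1, vec7_2, vec7_3, vec7_4, vec7_5, vec7_6,
          vec7_0', vec7_1', vec7_2', vec7_3', vec7_4', vec7_5', vec7_6']
        rw [← Real.exp_eq_exp_ℝ]
        all_goals simp [Real.exp_zero]
    rw [Matrix.exp_diagonal, hv]
  rw [key, ← hInv, Matrix.exp_conj Pmat _ hUnit, hInv, hexp, hEm]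
  funext j
  fin_cases j <;>
  · simp only [Matrix.vecMul, Matrix.mul_apply, dotProduct, Fin.sum_univ_seven,
      Matrix.of_apply, Pmat, Pinv, M, Pi.smul_apply, smul_eq_mul,
      vec7_0, vec7_1, vec7_2, vec7_3, vec7_4, vec7_5, vec7_6,
      vec7_0', vec7_1', vec7_2', vec7_3', vec7_4', vec7_5', vec7_6']
    ring
end

section
/- For every t > 0, writing q(t) = e₅ · exp(tQ) with e₅ = (0,0,0,0,0,1,0) and entries q₀(t),…,q₆(t), the following three identities hold: q₅(t) = (1/8)e^{−5t} + (1/6)e^{−4t} + (1/12)e^{−3t} + (11/24)e^{−t} + 1/6; q₀(t) + q₆(t) = −(1/6)e^{−4t} − (1/6)e^{−3t} + (1/6)e^{−t} + 1/6; and q₁(t) + q₃(t) + q₅(t) = (1/2)e^{−4t} + 1/2. -/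
open Matrix

/-- `q t = e₅ · exp(tQ)`, the state distribution at time `t` started from state `5`. -/
noncomputable def q (t : ℝ) : Fin 7 → ℝ :=
  Matrix.vecMul (![0, 0, 0, 0, 0, 1, 0] : Fin 7 → ℝ) (NormedSpace.exp (t • Q))


attribute [local instance] Matrix.linftyOpNormedAddCommGroup Matrix.linftyOpNormedRing
  Matrix.linftyOpNormedAlgebra

lemma vecMul_pow_eigen {n : ℕ} (w : Fin n → ℝ) (A : Matrix (Fin n) (Fin n) ℝ) (lam : ℝ)
    (h : w ᵥ* A = lam • w) (k : ℕ) : w ᵥ* (A ^ k) = (lam ^ k) • w := by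
  induction k with
  | zero => simp
  | succ k ih =>
      rw [pow_succ, ← Matrix.vecMul_vecMul, ih, Matrix.smul_vecMul, h, smul_smul, pow_succ]

lemma vecMul_exp_eigen {n : ℕ} (w : Fin n → ℝ) (A : Matrix (Fin n) (Fin n) ℝ) (lam : ℝ)
    (h : w ᵥ* A = lam • w) :
    w ᵥ* (NormedSpace.exp A) = Real.exp lam • w := by
  classical
  let L0 : Matrix (Fin n) (Fin n) ℝ →ₗ[ℝ] (Fin n → ℝ) :=
    { toFun := fun M => w ᵥ* M
      map_add' := fun M N => Matrix.vecMul_add M N w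
      map_smul' := fun c M => by
        ext j
        simp [Matrix.vecMul, dotProduct, Finset.mul_sum, mul_left_comm] }
  let L : Matrix (Fin n) (Fin n) ℝ →L[ℝ] (Fin n → ℝ) := L0.toContinuousLinearMap
  have hsum : Summable (fun k : ℕ => ((Nat.factorial k : ℝ))⁻¹ • A ^ k) :=
    NormedSpace.expSeries_summable' A
  have hsum' : Summable (fun k : ℕ => ((Nat.factorial k : ℝ))⁻¹ • lam ^ k) :=
    NormedSpace.expSeries_summable' (𝔸 := ℝ) lam
  have hL : w ᵥ* (NormedSpace.exp A) = ∑' k : ℕ, ((Nat.factorial k : ℝ))⁻¹ • (w ᵥ* A ^ k) := by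
    have := L.map_tsum hsum
    simpa [L, L0, NormedSpace.exp_eq_tsum (𝕂 := ℝ)] using this
  rw [hL]
  have hterm : ∀ k : ℕ, ((Nat.factorial k : ℝ))⁻¹ • (w ᵥ* A ^ k) = (((Nat.factorial k : ℝ))⁻¹ • lam ^ k) • w := by
    intro k
    rw [vecMul_pow_eigen w A lam h k, smul_smul, smul_eq_mul]
  simp_rw [hterm]
  rw [Summable.tsum_smul_const hsum', Real.exp_eq_exp_ℝ, NormedSpace.exp_eq_tsum (𝕂 := ℝ)]

lemma vecMul_smul_mat {n : ℕ} (w : Fin n → ℝ) (c : ℝ) (A : Matrix (Fin n) (Fin n) ℝ) :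
    w ᵥ* (c • A) = c • (w ᵥ* A) := by
  ext j
  simp [Matrix.vecMul, dotProduct, Finset.mul_sum, mul_left_comm]

noncomputable def w0 : Fin 7 → ℝ := ![1, 2, 2, 2, 2, 2, 1]
noncomputable def w1 : Fin 7 → ℝ := ![-1, -2, 0, 1, 1, 1, 0]
noncomputable def w2 : Fin 7 → ℝ := ![2, 3, -1, -3, -2, 0, 1]
noncomputable def w3 : Fin 7 → ℝ := ![1, -1, -1, 2, -1, -1, 1]
noncomputable def w4 : Fin 7 → ℝ := ![-1, 1, 0, 1, -2, 1, 0]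
noncomputable def w5 : Fin 7 → ℝ := ![-1, 0, 2, 0, -2, 0, 1]
noncomputable def w6 : Fin 7 → ℝ := ![-1, 1, -1, 0, 1, -1, 1]

lemma hw0 : w0 ᵥ* Q = (0 : ℝ) • w0 := by
  funext j
  fin_cases j <;>
    norm_num [Q, w0, Matrix.vecMul, dotProduct, Fin.sum_univ_succ,
      Matrix.cons_val_zero, Matrix.cons_val_succ]
lemma hw1 : w1 ᵥ* Q = (-1 : ℝ) • w1 := by
  funext j
  fin_cases j <;>
    norm_num [Q, w1, Matrix.vecMul, dotProduct, Fin.sum_univ_succ,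
      Matrix.cons_val_zero, Matrix.cons_val_succ]
lemma hw2 : w2 ᵥ* Q = (-1 : ℝ) • w2 := by
  funext j
  fin_cases j <;>
    norm_num [Q, w2, Matrix.vecMul, dotProduct, Fin.sum_univ_succ,
      Matrix.cons_val_zero, Matrix.cons_val_succ]
lemma hw3 : w3 ᵥ* Q = (-3 : ℝ) • w3 := by
  funext j
  fin_cases j <;>
    norm_num [Q, w3, Matrix.vecMul, dotProduct, Fin.sum_univ_succ,
      Matrix.cons_val_zero, Matrix.cons_val_succ]
lemma hw4 : w4 ᵥ* Q = (-4 : ℝ) • w4 := by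
  funext j
  fin_cases j <;>
    norm_num [Q, w4, Matrix.vecMul, dotProduct, Fin.sum_univ_succ,
      Matrix.cons_val_zero, Matrix.cons_val_succ]
lemma hw5 : w5 ᵥ* Q = (-4 : ℝ) • w5 := by
  funext j
  fin_cases j <;>
    norm_num [Q, w5, Matrix.vecMul, dotProduct, Fin.sum_univ_succ,
      Matrix.cons_val_zero, Matrix.cons_val_succ]
lemma hw6 : w6 ᵥ* Q = (-5 : ℝ) • w6 := by
  funext j
  fin_cases j <;>
    norm_num [Q, w6, Matrix.vecMul, dotProduct, Fin.sum_univ_succ,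
      Matrix.cons_val_zero, Matrix.cons_val_succ]

lemma cw0_0 : w0 0 = 1 := rfl
lemma cw0_1 : w0 1 = 2 := rfl
lemma cw0_3 : w0 3 = 2 := rfl
lemma cw0_5 : w0 5 = 2 := rfl
lemma cw0_6 : w0 6 = 1 := rfl
lemma cw1_0 : w1 0 = -1 := rfl
lemma cw1_1 : w1 1 = -2 := rfl
lemma cw1_3 : w1 3 = 1 := rfl
lemma cw1_5 : w1 5 = 1 := rfl
lemma cw1_6 : w1 6 = 0 := rfl
lemma cw2_0 : w2 0 = 2 := rfl
lemma cw2_1 : w2 1 = 3 := rfl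
lemma cw2_3 : w2 3 = -3 := rfl
lemma cw2_5 : w2 5 = 0 := rfl
lemma cw2_6 : w2 6 = 1 := rfl
lemma cw3_0 : w3 0 = 1 := rfl
lemma cw3_1 : w3 1 = -1 := rfl
lemma cw3_3 : w3 3 = 2 := rfl
lemma cw3_5 : w3 5 = -1 := rfl
lemma cw3_6 : w3 6 = 1 := rfl
lemma cw4_0 : w4 0 = -1 := rfl
lemma cw4_1 : w4 1 = 1 := rfl
lemma cw4_3 : w4 3 = 1 := rfl
lemma cw4_5 : w4 5 = 1 := rfl
lemma cw4_6 : w4 6 = 0 := rfl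
lemma cw5_0 : w5 0 = -1 := rfl
lemma cw5_1 : w5 1 = 0 := rfl
lemma cw5_3 : w5 3 = 0 := rfl
lemma cw5_5 : w5 5 = 0 := rfl
lemma cw5_6 : w5 6 = 1 := rfl
lemma cw6_0 : w6 0 = -1 := rfl
lemma cw6_1 : w6 1 = 1 := rfl
lemma cw6_3 : w6 3 = 0 := rfl
lemma cw6_5 : w6 5 = -1 := rfl
lemma cw6_6 : w6 6 = 1 := rfl

theorem q_identities (t : ℝ) (ht : 0 < t) :
    q t 5 = (1/8) * Real.exp (-5 * t) + (1/6) * Real.exp (-4 * t)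
        + (1/12) * Real.exp (-3 * t) + (11/24) * Real.exp (-t) + 1/6 ∧
    q t 0 + q t 6 = -(1/6) * Real.exp (-4 * t) - (1/6) * Real.exp (-3 * t)
        + (1/6) * Real.exp (-t) + 1/6 ∧
    q t 1 + q t 3 + q t 5 = (1/2) * Real.exp (-4 * t) + 1/2 := by
  have key : ∀ (w : Fin 7 → ℝ) (lam : ℝ), w ᵥ* Q = lam • w →
      w ᵥ* NormedSpace.exp (t • Q) = Real.exp (lam * t) • w := by
    intro w lam h
    apply vecMul_exp_eigen
    rw [vecMul_smul_mat, h, smul_smul, mul_comm]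
  have hdecomp : (![0, 0, 0, 0, 0, 1, 0] : Fin 7 → ℝ) = (1/12 : ℝ) • w0 + (11/24 : ℝ) • w1 + (5/24 : ℝ) • w2 + (-(1/12) : ℝ) • w3 + (1/6 : ℝ) • w4 + (-(1/12) : ℝ) • w5 + (-(1/8) : ℝ) • w6 := by
    funext j
    fin_cases j <;>
      norm_num [w0, w1, w2, w3, w4, w5, w6]
  have hE : q t = (1/12 : ℝ) • (Real.exp ((0 : ℝ) * t) • w0) + (11/24 : ℝ) • (Real.exp ((-1 : ℝ) * t) • w1) + (5/24 : ℝ) • (Real.exp ((-1 : ℝ) * t) • w2) + (-(1/12) : ℝ) • (Real.exp ((-3 : ℝ) * t) • w3) + (1/6 : ℝ) • (Real.exp ((-4 : ℝ) * t) • w4) + (-(1/12) : ℝ) • (Real.exp ((-4 : ℝ) * t) • w5) + (-(1/8) : ℝ) • (Real.exp ((-5 : ℝ) * t) • w6) := by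
    show (![0, 0, 0, 0, 0, 1, 0] : Fin 7 → ℝ) ᵥ* NormedSpace.exp (t • Q) = _
    rw [hdecomp]
    simp only [Matrix.add_vecMul, Matrix.smul_vecMul, key w0 0 hw0, key w1 (-1) hw1, key w2 (-1) hw2, key w3 (-3) hw3, key w4 (-4) hw4, key w5 (-4) hw5, key w6 (-5) hw6]
  have h0 := congrFun hE 0
  simp only [Pi.add_apply, Pi.smul_apply, smul_eq_mul, cw0_0, cw1_0, cw2_0, cw3_0, cw4_0, cw5_0, cw6_0] at h0
  have h1 := congrFun hE 1
  simp only [Pi.add_apply, Pi.smul_apply, smul_eq_mul, cw0_1, cw1_1, cw2_1, cw3_1, cw4_1, cw5_1, cw6_1] at h1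
  have h3 := congrFun hE 3
  simp only [Pi.add_apply, Pi.smul_apply, smul_eq_mul, cw0_3, cw1_3, cw2_3, cw3_3, cw4_3, cw5_3, cw6_3] at h3
  have h5 := congrFun hE 5
  simp only [Pi.add_apply, Pi.smul_apply, smul_eq_mul, cw0_5, cw1_5, cw2_5, cw3_5, cw4_5, cw5_5, cw6_5] at h5
  have h6 := congrFun hE 6
  simp only [Pi.add_apply, Pi.smul_apply, smul_eq_mul, cw0_6, cw1_6, cw2_6, cw3_6, cw4_6, cw5_6, cw6_6] at h6
  refine ⟨?_, ?_, ?_⟩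
  · rw [h5]
    simp only [zero_mul, Real.exp_zero, neg_one_mul]
    ring
  · rw [h0, h6]
    simp only [zero_mul, Real.exp_zero, neg_one_mul]
    ring
  · rw [h1, h3, h5]
    simp only [zero_mul, Real.exp_zero, neg_one_mul]
    ring
end

section
/- For each pair of indices i, j ∈ {0,…,6} there exist real constants a, b, c, d, e (depending only on i and j) such that for all real t ≥ 0, the (i, j) entry of exp(tQ) equals a + b·e^{−t} + c·e^{−3t} + d·e^{−4t} + e·e^{−5t}. -/
open Matrix

/-- Matrix of eigenvectors of `Q` (columns). -/
noncomputable def U : Matrix (Fin 7) (Fin 7) ℝ :=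
  !![1, -2,  4,  2, -2, -1, -2;
     1, -2,  3, -1,  1,  0,  1;
     1,  0, -1, -1,  0,  1, -1;
     1,  1, -3,  2,  1,  0,  0;
     1,  1, -2, -1, -2, -1,  1;
     1,  1,  0, -1,  1,  0, -1;
     1,  0,  2,  2,  0,  1,  2]

/-- Inverse of `U`. -/
noncomputable def V : Matrix (Fin 7) (Fin 7) ℝ :=
  (1/24 : ℝ) •
  !![ 2,  4,  4,  4,  4,  4,  2;
     -1, -7, -5, -4,  1, 11,  5;
      1, -1, -3, -4, -1,  5,  3;
      2, -2, -2,  4, -2, -2,  2;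
     -2,  4, -4,  4, -4,  4, -2;
     -2, -4, 12, -4, -4, -4,  6;
     -3,  3, -3,  0,  3, -3,  3]

/-- The eigenvalues of `Q`, in the order matching the columns of `U`. -/
noncomputable def dv : Fin 7 → ℝ := ![0, -1, -1, -3, -4, -4, -5]


@[simp]
lemma cons_val_five {α : Type*} {m : ℕ} (x : α) (u : Fin m.succ.succ.succ.succ.succ → α) :
    Matrix.vecCons x u 5 = Matrix.vecHead (Matrix.vecTail (Matrix.vecTail (Matrix.vecTail (Matrix.vecTail u)))) :=
  rfl

@[simp]
lemma cons_val_six {α : Type*} {m : ℕ} (x : α) (u : Fin m.succ.succ.succ.succ.succ.succ → α) :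
    Matrix.vecCons x u 6 = Matrix.vecHead (Matrix.vecTail (Matrix.vecTail (Matrix.vecTail (Matrix.vecTail (Matrix.vecTail u))))) :=
  rfl

set_option maxHeartbeats 2000000 in
lemma hUV : U * V = 1 := by
  ext i j
  fin_cases i <;> fin_cases j <;>
    simp [U, V, Matrix.mul_apply, Fin.sum_univ_seven, Matrix.one_apply,
      Matrix.smul_apply, smul_eq_mul] <;> norm_num

lemma hVU : V * U = 1 := mul_eq_one_comm.mp hUV

lemma hU_unit : IsUnit U := ⟨⟨U, V, hUV, hVU⟩, rfl⟩

lemma hUinv : U⁻¹ = V := Matrix.inv_eq_right_inv hUV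

set_option maxHeartbeats 2000000 in
lemma hQ : Q = U * Matrix.diagonal dv * V := by
  ext i j
  rw [Matrix.mul_apply]
  simp only [Matrix.mul_diagonal]
  fin_cases i <;> fin_cases j <;>
    simp [Q, U, V, dv, Fin.sum_univ_seven, Matrix.smul_apply, smul_eq_mul] <;> norm_num [Matrix.vecHead, Matrix.vecTail]

lemma key (t : ℝ) :
    NormedSpace.exp (t • Q) =
      U * Matrix.diagonal (fun k => Real.exp (t * dv k)) * V := by
  have h2 : (Matrix.diagonal fun k => t * dv k) = t • Matrix.diagonal dv := by
    rw [← Matrix.diagonal_smul]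
    rfl
  have h1 : t • Q = U * Matrix.diagonal (fun k => t * dv k) * U⁻¹ := by
    rw [hUinv, hQ, h2, Matrix.mul_smul, Matrix.smul_mul]
  rw [h1, Matrix.exp_conj U _ hU_unit, Matrix.exp_diagonal, hUinv,
    show (NormedSpace.exp fun k => t * dv k) = fun k => Real.exp (t * dv k) from
      funext fun k => by rw [Pi.coe_exp, ← Real.exp_eq_exp_ℝ]]

theorem exp_entries_form (i j : Fin 7) :
    ∃ a b c d e : ℝ, ∀ t : ℝ, 0 ≤ t →
      NormedSpace.exp (t • Q) i j =
        a + b * Real.exp (-t) + c * Real.exp (-3 * t)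
          + d * Real.exp (-4 * t) + e * Real.exp (-5 * t) := by
  refine ⟨U i 0 * V 0 j, U i 1 * V 1 j + U i 2 * V 2 j, U i 3 * V 3 j,
    U i 4 * V 4 j + U i 5 * V 5 j, U i 6 * V 6 j, fun t _ => ?_⟩
  rw [key t, Matrix.mul_apply]
  simp only [Matrix.mul_diagonal, Fin.sum_univ_seven, Fin.isValue, dv]
  norm_num [show t * (-1 : ℝ) = -t by ring, show t * (-3 : ℝ) = -3 * t by ring,
    show t * (-4 : ℝ) = -4 * t by ring, show t * (-5 : ℝ) = -5 * t by ring,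
    show ![(0 : ℝ), -1, -1, -3, -4, -4, -5] 2 = -1 from rfl,
    show ![(0 : ℝ), -1, -1, -3, -4, -4, -5] 3 = -3 from rfl,
    show ![(0 : ℝ), -1, -1, -3, -4, -4, -5] 4 = -4 from rfl]
  ring
end
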